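/- Under hyper-generalized recurrence with recurrence 1-forms A and B, the conharmonic curvature tensor satisfies ∇_U ℂ = A(U)·ℂ − (2r/(n−2))·B(U)·G for all U ∈ V. In particular, if r ≠ 0, then the 1-form B' := −(2r/(n−2))·B is nonzero and ∇_U ℂ = A(U)·ℂ + B'(U)·G, i.e. the space is generalized conharmonically recurrent. (Theorem 3.2(a).) -/

import Mathlib

open scoped BigOperators

/-- Kulkarni–Nomizu product of two bilinear forms (as real-valued functions). -/
def KN {V : Type*} (h k : V → V → ℝ) (X Y Z W : V) : ℝ :=
  h X Z * k Y W + h Y W * k X Z - h X W * k Y Z - h Y Z * k X W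

/-- The tensor `G(X,Y,Z,W) = g(X,Z)g(Y,W) - g(Y,Z)g(X,W)`. -/
def Gten {V : Type*} (g : V → V → ℝ) (X Y Z W : V) : ℝ :=
  g X Z * g Y W - g Y Z * g X W

/-- Derivation action of the curvature endomorphism `Rend U V` on a quadrilinear form `T`. -/
def derAct {V : Type*} (Rend : V → V → V → V) (T : V → V → V → V → ℝ)
    (U V' X Y Z W : V) : ℝ :=
  - T (Rend U V' X) Y Z W - T X (Rend U V' Y) Z W
    - T X Y (Rend U V' Z) W - T X Y Z (Rend U V' W)

/-! Contracting the hyper-generalized recurrence condition gives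
`∇_U Ric = A(U) Ric + B(U) (r g + (n - 2) Ric)`, since the Kulkarni–Nomizu product `g ∧ k`
contracts to `tr(k) g + (n - 2) k`. Substituted into `∇_U ℂ`, the factor `1/(n - 2)` makes the
`B(U) (g ∧ Ric)` terms cancel, and `g ∧ g = 2G` leaves `-(2r/(n - 2)) B(U) G`. -/

section DualPair

variable {K V ι : Type*} [Field K] [AddCommGroup V] [Module K V] [Fintype ι] [DecidableEq ι]
  {g : V →ₗ[K] V →ₗ[K] K} {b : Module.Basis ι K V} {e' : ι → V}

theorem Module.Basis.repr_eq_apply_of_dual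
    (hdual : ∀ i j, g (b i) (e' j) = if i = j then 1 else 0) (X : V) (j : ι) :
    b.repr X j = g X (e' j) := by
  conv_rhs => rw [← b.sum_repr X]
  simp only [map_sum, map_smul, LinearMap.sum_apply, LinearMap.smul_apply, hdual, smul_eq_mul,
    mul_ite, mul_one, mul_zero, Finset.sum_ite_eq', Finset.mem_univ, if_true]

theorem linearIndependent_of_dual (hdual : ∀ i j, g (b i) (e' j) = if i = j then 1 else 0) :
    LinearIndependent K e' := by
  rw [Fintype.linearIndependent_iff]
  intro c hc i
  simpa [hdual] using congrArg (g (b i)) hc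

theorem sum_apply_smul_dual_eq (hdual : ∀ i j, g (b i) (e' j) = if i = j then 1 else 0)
    (Z : V) : ∑ i, g (b i) Z • e' i = Z := by
  have := Module.Finite.of_basis b
  have hspan := (linearIndependent_of_dual hdual).span_eq_top_of_card_eq_finrank'
    (Module.finrank_eq_card_basis b).symm
  obtain ⟨c, rfl⟩ :=
    (Submodule.mem_span_range_iff_exists_fun K).mp (hspan ▸ Submodule.mem_top (x := Z))
  simp [hdual]

theorem sum_apply_dual_mul_apply (hdual : ∀ i j, g (b i) (e' j) = if i = j then 1 else 0)
    (f : V →ₗ[K] K) (X : V) : ∑ i, g X (e' i) * f (b i) = f X := by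
  conv_rhs => rw [← b.sum_repr X]
  simp [b.repr_eq_apply_of_dual hdual]

theorem sum_apply_mul_apply_dual (hdual : ∀ i j, g (b i) (e' j) = if i = j then 1 else 0)
    (f : V →ₗ[K] K) (Z : V) : ∑ i, g (b i) Z * f (e' i) = f Z := by
  conv_rhs => rw [← sum_apply_smul_dual_eq hdual Z]
  simp

end DualPair

def ricciContraction {K V ι : Type*} [CommSemiring K] [AddCommMonoid V] [Module K V]
    [Fintype ι] (R : V →ₗ[K] V →ₗ[K] V →ₗ[K] V →ₗ[K] K) (b e' : ι → V) : V →ₗ[K] V →ₗ[K] K :=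
  LinearMap.mk₂ K (fun X Z => ∑ i, R X (b i) Z (e' i))
    (by simp [Finset.sum_add_distrib]) (by simp [Finset.mul_sum])
    (by simp [Finset.sum_add_distrib]) (by simp [Finset.mul_sum])

theorem sum_KN_apply_dual {V ι : Type*} [AddCommGroup V] [Module ℝ V] [Fintype ι]
    [DecidableEq ι] {g : V →ₗ[ℝ] V →ₗ[ℝ] ℝ} {b : Module.Basis ι ℝ V} {e' : ι → V}
    (hdual : ∀ i j, g (b i) (e' j) = if i = j then 1 else 0) (k : V →ₗ[ℝ] V →ₗ[ℝ] ℝ)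
    (X Z : V) :
    ∑ i, KN (fun a c => g a c) (fun a c => k a c) X (b i) Z (e' i)
      = (∑ i, k (b i) (e' i)) * g X Z + ((Fintype.card ι : ℝ) - 2) * k X Z := by
  have htrace : ∑ i, g (b i) (e' i) = Fintype.card ι := by simp [hdual]
  have hX := sum_apply_dual_mul_apply hdual (k.flip Z) X
  have hZ := sum_apply_mul_apply_dual hdual (k X) Z
  simp only [LinearMap.flip_apply] at hX
  simp only [KN, Finset.sum_add_distrib, Finset.sum_sub_distrib, ← Finset.mul_sum,
    ← Finset.sum_mul, htrace, hX, hZ]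
  ring

theorem conharmonic_derivative_eq_of_ricci_derivative_eq {V : Type*} (m a c r : ℝ)
    (hm : m - 2 ≠ 0) (R : V → V → V → V → ℝ) (g Ric DRic : V → V → ℝ)
    (hDRic : ∀ X Z, DRic X Z = a * Ric X Z + c * (r * g X Z + (m - 2) * Ric X Z)) (X Y Z W : V) :
    a * R X Y Z W + c * KN g Ric X Y Z W - 1 / (m - 2) * KN g DRic X Y Z W
      = a * (R X Y Z W - 1 / (m - 2) * KN g Ric X Y Z W)
        - 2 * r / (m - 2) * c * Gten g X Y Z W := by
  simp only [KN, Gten, hDRic]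
  field_simp
  ring

theorem hgr_generalized_conharmonically_recurrent_general {V : Type*} [AddCommGroup V] [Module ℝ V]
    (n : ℕ) (hn : 3 ≤ n)
    (b : Module.Basis (Fin n) ℝ V) (e' : Fin n → V)
    (g : V →ₗ[ℝ] V →ₗ[ℝ] ℝ)
    (hdual : ∀ i j, g (b i) (e' j) = if i = j then (1 : ℝ) else 0)
    (R : V →ₗ[ℝ] V →ₗ[ℝ] V →ₗ[ℝ] V →ₗ[ℝ] ℝ)
    (Ric : V → V → ℝ)
    (hRic : ∀ X Z, Ric X Z = ∑ i, R X (b i) Z (e' i))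
    (r : ℝ) (hr : r = ∑ i, Ric (b i) (e' i))
    (D : V →ₗ[ℝ] V →ₗ[ℝ] V →ₗ[ℝ] V →ₗ[ℝ] V →ₗ[ℝ] ℝ)
    (A B : V →ₗ[ℝ] ℝ) (hB : B ≠ 0)
    (hHGR : ∀ U X Y Z W,
      D U X Y Z W = A U * R X Y Z W + B U * KN (fun a c => g a c) Ric X Y Z W)
    (DRic : V → V → V → ℝ)
    (hDRicDef : ∀ U X Z, DRic U X Z = ∑ i, D U X (b i) Z (e' i))
    (Cc : V → V → V → V → ℝ)
    (hCc : ∀ X Y Z W, Cc X Y Z W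
      = R X Y Z W - (1 / ((n : ℝ) - 2)) * KN (fun a c => g a c) Ric X Y Z W)
    (DC : V → V → V → V → V → ℝ)
    (hDC : ∀ U X Y Z W, DC U X Y Z W
      = D U X Y Z W - (1 / ((n : ℝ) - 2)) * KN (fun a c => g a c) (DRic U) X Y Z W)
    :
    (∀ U X Y Z W, DC U X Y Z W
        = A U * Cc X Y Z W
          - 2 * r / ((n : ℝ) - 2) * B U * Gten (fun a c => g a c) X Y Z W) ∧
    (r ≠ 0 →
      (-(2 * r / ((n : ℝ) - 2))) • B ≠ (0 : V →ₗ[ℝ] ℝ) ∧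
      ∀ U X Y Z W, DC U X Y Z W
        = A U * Cc X Y Z W
          + ((-(2 * r / ((n : ℝ) - 2))) • B) U * Gten (fun a c => g a c) X Y Z W) := by
  have hn2 : (n : ℝ) - 2 ≠ 0 := by
    have : (3 : ℝ) ≤ n := by exact_mod_cast hn
    linarith
  have hRicL : Ric = fun X Z => ricciContraction R b e' X Z := funext₂ hRic
  have hDRic : ∀ U X Z, DRic U X Z
      = A U * Ric X Z + B U * (r * g X Z + ((n : ℝ) - 2) * Ric X Z) := by
    intro U X Z
    simp only [hDRicDef, hHGR, Finset.sum_add_distrib, ← Finset.mul_sum]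
    rw [hRicL] at hr ⊢
    rw [sum_KN_apply_dual hdual, Fintype.card_fin, ← hr]
    rfl
  have hDC' : ∀ U X Y Z W, DC U X Y Z W
      = A U * Cc X Y Z W - 2 * r / ((n : ℝ) - 2) * B U * Gten (fun a c => g a c) X Y Z W := by
    intro U X Y Z W
    rw [hDC, hCc, hHGR]
    exact conharmonic_derivative_eq_of_ricci_derivative_eq _ _ _ _ hn2 (fun X Y Z W => R X Y Z W)
      (fun a c => g a c) _ _ (hDRic U) X Y Z W
  refine ⟨hDC', fun hr0 => ⟨smul_ne_zero ?_ hB, fun U X Y Z W => ?_⟩⟩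
  · simpa [hn2] using hr0
  · rw [hDC', LinearMap.smul_apply, smul_eq_mul]
    ring

theorem hgr_generalized_conharmonically_recurrent {V : Type*} [AddCommGroup V] [Module ℝ V]
    (n : ℕ) (hn : 3 ≤ n)
    (b : Module.Basis (Fin n) ℝ V) (e' : Fin n → V)
    (g : V →ₗ[ℝ] V →ₗ[ℝ] ℝ)
    (hg_symm : ∀ X Y, g X Y = g Y X)
    (hg_nd : ∀ X, (∀ Y, g X Y = 0) → X = 0)
    (hdual : ∀ i j, g (b i) (e' j) = if i = j then (1 : ℝ) else 0)
    (R : V →ₗ[ℝ] V →ₗ[ℝ] V →ₗ[ℝ] V →ₗ[ℝ] ℝ)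
    (hR_ne : R ≠ 0)
    (hR_anti : ∀ X Y Z W, R X Y Z W = - R Y X Z W)
    (hR_pair : ∀ X Y Z W, R X Y Z W = R Z W X Y)
    (Ric : V → V → ℝ)
    (hRic : ∀ X Z, Ric X Z = ∑ i, R X (b i) Z (e' i))
    (r : ℝ) (hr : r = ∑ i, Ric (b i) (e' i))
    (D : V →ₗ[ℝ] V →ₗ[ℝ] V →ₗ[ℝ] V →ₗ[ℝ] V →ₗ[ℝ] ℝ)
    (hBianchi : ∀ X Y Z W U, D X Y Z W U + D Y Z X W U + D Z X Y W U = 0)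
    (A B : V →ₗ[ℝ] ℝ) (hA : A ≠ 0) (hB : B ≠ 0)
    (hHGR : ∀ U X Y Z W,
      D U X Y Z W = A U * R X Y Z W + B U * KN (fun a c => g a c) Ric X Y Z W)
    (DRic : V → V → V → ℝ)
    (hDRicDef : ∀ U X Z, DRic U X Z = ∑ i, D U X (b i) Z (e' i))
    (Cc : V → V → V → V → ℝ)
    (hCc : ∀ X Y Z W, Cc X Y Z W
      = R X Y Z W - (1 / ((n : ℝ) - 2)) * KN (fun a c => g a c) Ric X Y Z W)
    (DC : V → V → V → V → V → ℝ)
    (hDC : ∀ U X Y Z W, DC U X Y Z W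
      = D U X Y Z W - (1 / ((n : ℝ) - 2)) * KN (fun a c => g a c) (DRic U) X Y Z W)
    :
    (∀ U X Y Z W, DC U X Y Z W
        = A U * Cc X Y Z W
          - 2 * r / ((n : ℝ) - 2) * B U * Gten (fun a c => g a c) X Y Z W) ∧
    (r ≠ 0 →
      (-(2 * r / ((n : ℝ) - 2))) • B ≠ (0 : V →ₗ[ℝ] ℝ) ∧
      ∀ U X Y Z W, DC U X Y Z W
        = A U * Cc X Y Z W
          + ((-(2 * r / ((n : ℝ) - 2))) • B) U * Gten (fun a c => g a c) X Y Z W) :=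
  hgr_generalized_conharmonically_recurrent_general n hn b e' g hdual R Ric hRic r hr D A B hB hHGR
    DRic hDRicDef Cc hCc DC hDC
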